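/- arXiv:1109.1680 — 4 statements merged into one kernel-verified Lean document; each statement's English description precedes it below -/
import Mathlib

section
/- Let G be a cyclic group of order p^a and H its unique subgroup of order p, where p is a prime. A finitely generated F_p[G]-module M is free over F_p[G] if and only if its restriction to H is free over F_p[H]. -/
/-!
Write `t = g - 1` for a generator `g` of `G` and `m = p ^ (a - 1)`. In characteristic `p`,
`F_p[G] = F_p[X] / (X - 1) ^ (p ^ a)` with `X ↦ g`, and `h = g ^ m` generates `H`, with
`h - 1 ↦ (g - 1) ^ m = t ^ m` in `F_p[G]`.

Over `R = A / (π ^ n)`, `A` a PID and `π` irreducible, a finitely generated module `M` is free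
iff every element killed by `π` is a multiple of `π ^ (n - 1)`: by the structure theorem `M` is a
sum of modules `A / (π ^ k)` with `k ≤ n`, and the condition rules out `0 < k < n`.

For `t` acting with `t ^ N = 0`, the condition `ker t ⊆ im t ^ (N - 1)` is equivalent to
`ker t ^ i ⊆ im t ^ (N - i)` for every `0 < i < N`. With `N = p ^ a` and `i = m` this is the
condition for `s = h - 1` on the restriction of `M` to `H`, since `s ^ (p - 1)` acts as
`t ^ (N - m)`.
-/

open Polynomial Function

/-- The module structure on `M` over the group algebra `F_p[H]` of a subgroup `H ≤ G`,
obtained by restricting a module structure over `F_p[G]` along the inclusion `H → G`. -/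
noncomputable def restrictedModule (p : ℕ) [Fact p.Prime] {G : Type*} [Group G]
    (H : Subgroup G) (M : Type*) [AddCommGroup M]
    [Module (MonoidAlgebra (ZMod p) G) M] :
    Module (MonoidAlgebra (ZMod p) H) M :=
  Module.compHom M (MonoidAlgebra.mapDomainRingHom (ZMod p) H.subtype)

def KerSMulLERangeSMul {R : Type*} (t s : R) (M : Type*) [SMul R M] [Zero M] : Prop :=
  ∀ x : M, t • x = 0 → ∃ y, x = s • y

section Shift

variable {R M : Type*} [Monoid R] [AddGroup M] [DistribMulAction R M] {t : R} {N : ℕ}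

theorem KerSMulLERangeSMul.pow_succ (h₁ : KerSMulLERangeSMul t (t ^ (N - 1)) M) {k : ℕ}
    (hk : k < N) (h : KerSMulLERangeSMul (t ^ k) (t ^ (N - k)) M) :
    KerSMulLERangeSMul (t ^ (k + 1)) (t ^ (N - (k + 1))) M := by
  intro x hx
  obtain ⟨y, hy⟩ := h₁ (t ^ k • x) (by rwa [smul_smul, ← pow_succ'])
  obtain ⟨z, hz⟩ := h (x - t ^ (N - (k + 1)) • y) (by
    rw [smul_sub, smul_smul, ← pow_add, show k + (N - (k + 1)) = N - 1 by omega, ← hy,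
      sub_self])
  refine ⟨t • z + y, ?_⟩
  rw [smul_add, smul_smul, ← _root_.pow_succ, show N - (k + 1) + 1 = N - k by omega, ← hz,
    sub_add_cancel]

theorem KerSMulLERangeSMul.of_pow_succ {k : ℕ} (hk : k + 1 < N)
    (h : KerSMulLERangeSMul (t ^ (k + 1)) (t ^ (N - (k + 1))) M) :
    KerSMulLERangeSMul (t ^ k) (t ^ (N - k)) M := by
  intro x hx
  obtain ⟨y, rfl⟩ := h x (by rw [pow_succ', mul_smul, hx, smul_zero])
  obtain ⟨u, hu⟩ := h (t ^ (N - (k + 2)) • y) (by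
    rw [smul_smul, ← pow_add, show k + 1 + (N - (k + 2)) = k + (N - (k + 1)) by omega, pow_add,
      mul_smul, hx])
  refine ⟨u, ?_⟩
  calc t ^ (N - (k + 1)) • y = t • t ^ (N - (k + 2)) • y := by
        rw [smul_smul, ← pow_succ', show N - (k + 2) + 1 = N - (k + 1) by omega]
    _ = t ^ (N - k) • u := by
        rw [hu, smul_smul, ← pow_succ', show N - (k + 1) + 1 = N - k by omega]

theorem kerSMulLERangeSMul_pow_iff {i : ℕ} (hi : i ≠ 0) (hiN : i < N) :
    KerSMulLERangeSMul (t ^ i) (t ^ (N - i)) M ↔ KerSMulLERangeSMul t (t ^ (N - 1)) M := by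
  induction i with
  | zero => exact absurd rfl hi
  | succ k ih =>
    rcases Nat.eq_zero_or_pos k with rfl | hk
    · simp only [zero_add, pow_one]
    · rw [← ih hk.ne' (by omega)]
      exact ⟨.of_pow_succ hiN, fun h => ((ih hk.ne' (by omega)).1 h).pow_succ (by omega) h⟩

end Shift

theorem KerSMulLERangeSMul.of_leftInverse {R M N : Type*} [Semiring R] [AddCommMonoid M]
    [AddCommMonoid N] [Module R M] [Module R N] {t s : R} (h : KerSMulLERangeSMul t s M)
    {f : N →ₗ[R] M} {g : M →ₗ[R] N} (hgf : LeftInverse g f) : KerSMulLERangeSMul t s N := by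
  intro x hx
  obtain ⟨y, hy⟩ := h (f x) (by rw [← map_smul, hx, map_zero])
  exact ⟨g y, by rw [← map_smul, ← hy, hgf x]⟩

theorem KerSMulLERangeSMul.of_free {R M : Type*} [Semiring R] [AddCommMonoid M] [Module R M]
    [Module.Free R M] {t s : R} (h : KerSMulLERangeSMul t s R) : KerSMulLERangeSMul t s M := by
  let b := Module.Free.chooseBasis R M
  intro x hx
  have hcoord (i) : t • b.repr x i = 0 := by simpa using congr(b.repr $hx i)
  choose d hd using fun i => h _ (hcoord i)
  refine ⟨(b.repr x).sum fun i _ => d i • b i, ?_⟩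
  calc x = (b.repr x).sum fun i r => r • b i := by
        conv_lhs => rw [← b.linearCombination_repr x, Finsupp.linearCombination_apply]
    _ = (b.repr x).sum fun i _ => s • d i • b i :=
        Finsupp.sum_congr fun i _ => by rw [hd i, smul_eq_mul, mul_smul]
    _ = s • (b.repr x).sum fun i _ => d i • b i := Finsupp.smul_sum.symm

section Quotient

variable {A : Type*} [CommRing A] [IsDomain A] {π : A} {k n : ℕ}

theorem le_of_pow_smul_mk_one_eq_zero (hπ : Irreducible π)
    (h : π ^ n • (Submodule.Quotient.mk 1 : A ⧸ A ∙ π ^ k) = 0) : k ≤ n := by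
  rw [← Submodule.Quotient.mk_smul, Submodule.Quotient.mk_eq_zero, smul_eq_mul, mul_one,
    Submodule.mem_span_singleton] at h
  obtain ⟨c, hc⟩ := h
  refine (pow_dvd_pow_iff hπ.ne_zero hπ.not_isUnit).1 ⟨c, ?_⟩
  rw [← hc, smul_eq_mul, mul_comm]

theorem le_of_kerSMulLERangeSMul_quotient (hπ : Irreducible π) (hk : k ≠ 0)
    (h : KerSMulLERangeSMul π (π ^ (n - 1)) (A ⧸ A ∙ π ^ k)) : n ≤ k := by
  by_contra! hkn
  obtain ⟨y, hy⟩ := h (Submodule.Quotient.mk (π ^ (k - 1))) (by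
    rw [← Submodule.Quotient.mk_smul, smul_eq_mul, ← pow_succ', Nat.sub_add_cancel
      (Nat.one_le_iff_ne_zero.2 hk), Submodule.Quotient.mk_eq_zero]
    exact Submodule.mem_span_singleton_self _)
  obtain ⟨g, rfl⟩ := Submodule.Quotient.mk_surjective _ y
  rw [← Submodule.Quotient.mk_smul, Submodule.Quotient.eq, Submodule.mem_span_singleton] at hy
  obtain ⟨c, hc⟩ := hy
  -- `π ^ (k - 1) = c π ^ k + π ^ (n - 1) g` would be divisible by `π ^ k`
  have hdvd : π ^ k ∣ π ^ (k - 1) := by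
    rw [(sub_eq_iff_eq_add.1 hc.symm)]
    exact dvd_add (Dvd.intro_left c rfl) (dvd_mul_of_dvd_left (pow_dvd_pow π (by omega)) g)
  have := (pow_dvd_pow_iff hπ.ne_zero hπ.not_isUnit).1 hdvd
  omega

end Quotient

noncomputable def LinearEquiv.piSubtypeOfSubsingleton {R ι : Type*} [Semiring R]
    (Q : ι → Type*) [∀ i, AddCommMonoid (Q i)] [∀ i, Module R (Q i)] (P : ι → Prop)
    [DecidablePred P] (h : ∀ i, ¬P i → Subsingleton (Q i)) :
    (Π i, Q i) ≃ₗ[R] Π i : {i // P i}, Q i :=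
  haveI : Unique (Π i : {i // ¬P i}, Q i) :=
    { default := 0, uniq := fun _ => funext fun i => (h i i.2).elim _ _ }
  ((piCongrLeft R Q (Equiv.sumCompl P)).symm.trans
    (sumPiEquivProdPi R {i // P i} {i // ¬P i} fun j => Q (Equiv.sumCompl P j))).trans
    (prodUnique (M := Π i : {i // P i}, Q i) (M₂ := Π i : {i // ¬P i}, Q i))

theorem kerSMulLERangeSMul_algebraMap_self {A R : Type*} [CommRing A] [IsDomain A] [Ring R]
    [Algebra A R] (hsurj : Surjective (algebraMap A R)) {π : A} (hπ : π ≠ 0) {n : ℕ}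
    (hn : n ≠ 0) (hker : RingHom.ker (algebraMap A R) = Ideal.span {π ^ n}) :
    KerSMulLERangeSMul (algebraMap A R π) (algebraMap A R π ^ (n - 1)) R := by
  intro r hr
  obtain ⟨f, rfl⟩ := hsurj r
  have hdvd : π * π ^ (n - 1) ∣ π * f := by
    rw [← _root_.pow_succ', Nat.sub_add_cancel (Nat.one_le_iff_ne_zero.2 hn),
      ← Ideal.mem_span_singleton, ← hker, RingHom.mem_ker, map_mul]
    exact hr
  obtain ⟨c, rfl⟩ := (mul_dvd_mul_iff_left hπ).1 hdvd
  exact ⟨algebraMap A R c, by rw [smul_eq_mul, map_mul, map_pow]⟩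

theorem exists_linearEquiv_pi_quotient {A N : Type*} [CommRing A] [IsDomain A]
    [IsPrincipalIdealRing A] [AddCommGroup N] [Module A N] [Module.Finite A N] {π : A}
    (hπ : Irreducible π) {n : ℕ} (htors : ∀ x : N, π ^ n • x = 0)
    (h : KerSMulLERangeSMul π (π ^ (n - 1)) N) :
    ∃ (ι : Type) (_ : Fintype ι), Nonempty (N ≃ₗ[A] (ι → A ⧸ A ∙ π ^ n)) := by
  classical
  obtain ⟨d, k, ⟨e⟩⟩ :=
    Module.torsion_by_prime_power_decomposition hπ fun x => ⟨⟨π ^ n, n, rfl⟩, htors x⟩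
  have hk (i : Fin d) (hi : k i ≠ 0) : k i = n := by
    -- the summand is a retract of `N`, so it inherits both hypotheses
    have hret : LeftInverse (DirectSum.component A (Fin d) _ i ∘ₗ e.toLinearMap)
        (e.symm.toLinearMap ∘ₗ DirectSum.lof A (Fin d) _ i) := fun x => by simp
    refine le_antisymm (le_of_pow_smul_mk_one_eq_zero hπ ?_)
      (le_of_kerSMulLERangeSMul_quotient hπ hi (h.of_leftInverse hret))
    rw [← hret (Submodule.Quotient.mk 1), ← map_smul, htors, map_zero]
  have htriv (i : Fin d) (hi : ¬k i ≠ 0) : Subsingleton (A ⧸ A ∙ π ^ k i) := by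
    rw [not_not.1 hi, pow_zero, Submodule.Quotient.subsingleton_iff]
    exact Ideal.span_singleton_one
  exact ⟨{i // k i ≠ 0}, inferInstance,
    ⟨e ≪≫ₗ DirectSum.linearEquivFunOnFintype A (Fin d) _ ≪≫ₗ
      LinearEquiv.piSubtypeOfSubsingleton _ _ htriv ≪≫ₗ
      LinearEquiv.piCongrRight fun i => Submodule.quotEquivOfEq _ _ (by rw [hk i i.2])⟩⟩

theorem free_iff_kerSMulLERangeSMul_of_ker_algebraMap {A R : Type*} [CommRing A] [IsDomain A]
    [IsPrincipalIdealRing A] [Ring R] [Algebra A R] (hsurj : Surjective (algebraMap A R))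
    {π : A} (hπ : Irreducible π) {n : ℕ} (hn : n ≠ 0)
    (hker : RingHom.ker (algebraMap A R) = Ideal.span {π ^ n})
    (M : Type*) [AddCommGroup M] [Module R M] [Module.Finite R M] :
    Module.Free R M ↔ KerSMulLERangeSMul (algebraMap A R π) (algebraMap A R π ^ (n - 1)) M := by
  refine ⟨fun _ => (kerSMulLERangeSMul_algebraMap_self hsurj hπ.ne_zero hn hker).of_free,
    fun h => ?_⟩
  -- decompose `M` over the PID `A`; as `A → R` is onto, `A`-linear maps are `R`-linear
  let : Module A M := Module.compHom M (algebraMap A R)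
  have : IsScalarTower A R M := IsScalarTower.of_algebraMap_smul fun _ _ => rfl
  have : Module.Finite A R := Module.Finite.of_surjective (Algebra.linearMap A R) hsurj
  have : Module.Finite A M := .trans R M
  have hπn : algebraMap A R (π ^ n) = 0 := by
    rw [← RingHom.mem_ker, hker]
    exact Ideal.mem_span_singleton_self _
  have htors (x : M) : π ^ n • x = 0 := by rw [← algebraMap_smul R, hπn, zero_smul]
  rw [← map_pow] at h
  obtain ⟨ι, _, ⟨e⟩⟩ := exists_linearEquiv_pi_quotient hπ htors h
  have hker' : A ∙ π ^ n = LinearMap.ker (Algebra.linearMap A R) := by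
    ext x
    rw [LinearMap.mem_ker, Algebra.linearMap_apply, ← RingHom.mem_ker, hker]
  let q : (A ⧸ A ∙ π ^ n) ≃ₗ[A] R := Submodule.quotEquivOfEq _ _ hker' ≪≫ₗ
    (Algebra.linearMap A R).quotKerEquivOfSurjective hsurj
  let e' : M ≃ₗ[A] (ι → R) := e ≪≫ₗ LinearEquiv.piCongrRight fun _ => q
  exact .of_equiv (e'.extendScalarsOfSurjective hsurj).symm

theorem minpoly.eq_of_surjective_aeval {K R : Type*} [Field K] [Ring R] [Algebra K R] {x : R}
    (hsurj : Surjective (Polynomial.aeval (R := K) x)) {q : K[X]} (hq : q.Monic)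
    (hqx : Polynomial.aeval x q = 0) (hdim : Module.finrank K R = q.natDegree) :
    minpoly K x = q := by
  have hker : RingHom.ker (Polynomial.aeval (R := K) x) = Ideal.span {minpoly K x} :=
    ker_aeval_eq_span_minpoly K x
  have hdim' : Module.finrank K R = (minpoly K x).natDegree := by
    rw [← finrank_quotient_span_eq_natDegree, ← hker]
    exact (Ideal.quotientKerAlgEquivOfSurjective hsurj).toLinearEquiv.finrank_eq.symm
  exact (eq_of_monic_of_dvd_of_natDegree_le (minpoly.monic ⟨q, hq, hqx⟩) hq
    (minpoly.dvd K x hqx) (by omega)).symm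

theorem MonoidAlgebra.commute_of_isMulCommutative {K Γ : Type*} [CommSemiring K] [Monoid Γ]
    [IsMulCommutative Γ] (r s : MonoidAlgebra K Γ) : Commute r s := by
  induction r using MonoidAlgebra.induction_linear with
  | zero => exact Commute.zero_left s
  | add r r' hr hr' => exact hr.add_left hr'
  | single g a =>
    exact single_commute (fun g' => IsMulCommutative.is_comm.comm g g') (Commute.all a) s

theorem MonoidAlgebra.of_sub_one_pow_char_pow (K : Type*) [Field K] (p : ℕ) [Fact p.Prime]
    [CharP K p] {G : Type*} [Monoid G] (g : G) (n : ℕ) :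
    (of K G g - 1) ^ p ^ n = of K G (g ^ p ^ n) - 1 := by
  have : CharP (MonoidAlgebra K G) p := charP_of_injective_algebraMap' K p
  rw [sub_pow_char_pow_of_commute p n (Commute.one_right _), one_pow, map_pow]

theorem MonoidAlgebra.free_iff_kerSMulLERangeSMul (K : Type*) [Field K] (p : ℕ) [Fact p.Prime]
    [CharP K p] {Γ : Type*} [Group Γ] [Fintype Γ] {c : Γ} (hc : ∀ x, x ∈ Subgroup.zpowers c)
    {b : ℕ} (hcard : Fintype.card Γ = p ^ b) (M : Type*) [AddCommGroup M]
    [Module (MonoidAlgebra K Γ) M] [Module.Finite (MonoidAlgebra K Γ) M] :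
    Module.Free (MonoidAlgebra K Γ) M ↔
      KerSMulLERangeSMul (of K Γ c - 1) ((of K Γ c - 1) ^ (p ^ b - 1)) M := by
  have : IsCyclic Γ := ⟨c, hc⟩
  let _ : Algebra K[X] (MonoidAlgebra K Γ) := (aeval (of K Γ c)).toRingHom.toAlgebra'
    fun _ _ => commute_of_isMulCommutative _ _
  have hsurj : Surjective (aeval (R := K) (of K Γ c)) := by
    intro r
    induction r using MonoidAlgebra.induction_linear with
    | zero => exact ⟨0, map_zero _⟩
    | add r r' hr hr' =>
      obtain ⟨f, rfl⟩ := hr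
      obtain ⟨f', rfl⟩ := hr'
      exact ⟨f + f', map_add _ _ _⟩
    | single g a =>
      obtain ⟨n, rfl⟩ := mem_powers_iff_mem_zpowers.2 (hc g)
      exact ⟨a • X ^ n, by simp⟩
  have hX : aeval (of K Γ c) (X - C 1 : K[X]) = of K Γ c - 1 := by simp
  have hq : aeval (of K Γ c) ((X - C 1 : K[X]) ^ p ^ b) = 0 := by
    rw [map_pow, hX, of_sub_one_pow_char_pow K p, ← hcard, pow_card_eq_one, map_one, sub_self]
  have hker : RingHom.ker (algebraMap K[X] (MonoidAlgebra K Γ)) =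
      Ideal.span {(X - C 1) ^ p ^ b} := by
    rw [← minpoly.eq_of_surjective_aeval hsurj ((monic_X_sub_C 1).pow _) hq]
    · exact minpoly.ker_aeval_eq_span_minpoly K _
    · rw [natDegree_pow, natDegree_X_sub_C, mul_one, Module.finrank_eq_card_basis (basis Γ K),
        hcard]
  rw [free_iff_kerSMulLERangeSMul_of_ker_algebraMap hsurj (irreducible_X_sub_C 1)
    (pow_ne_zero _ (Fact.out : p.Prime).ne_zero) hker,
    show algebraMap K[X] (MonoidAlgebra K Γ) (X - C 1) = of K Γ c - 1 from hX]

theorem IsCyclic.mem_of_pow_card_eq_one {G : Type*} [Group G] [IsCyclic G] [Finite G]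
    (H : Subgroup G) {x : G} (hx : x ^ Nat.card H = 1) : x ∈ H := by
  classical
  have := Fintype.ofFinite G
  have hsub : (H : Set G).toFinset ⊆ ({y | y ^ Nat.card H = 1} : Finset G) := fun y hy => by
    rw [Set.mem_toFinset] at hy
    rw [Finset.mem_filter_univ]
    exact congr_arg Subtype.val (pow_card_eq_one' (G := H) (x := ⟨y, hy⟩))
  have heq := Finset.eq_of_subset_of_card_le hsub (by
    rw [Set.toFinset_card, ← Nat.card_eq_fintype_card]
    exact IsCyclic.card_pow_eq_one_le Nat.card_pos)
  have hx' : x ∈ ({y | y ^ Nat.card H = 1} : Finset G) := by simpa using hx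
  rw [← heq, Set.mem_toFinset] at hx'
  exact hx'

theorem Subgroup.exists_pow_mem_generating_of_card_eq_prime {G : Type*} [Group G] [Finite G]
    {g : G} (hg : ∀ x, x ∈ zpowers g) {p m : ℕ} [Fact p.Prime] (hG : Nat.card G = p * m)
    (H : Subgroup G) (hH : Nat.card H = p) :
    ∃ hgm : g ^ m ∈ H, ∀ y : H, y ∈ zpowers ⟨g ^ m, hgm⟩ := by
  have : IsCyclic G := ⟨g, hg⟩
  have hp : p.Prime := Fact.out
  have hm : 0 < m := Nat.pos_of_mul_pos_left (hG ▸ Nat.card_pos)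
  have hgm : g ^ m ∈ H := IsCyclic.mem_of_pow_card_eq_one H (by
    rw [hH, ← pow_mul, mul_comm, ← hG, pow_card_eq_one'])
  refine ⟨hgm, fun _ => mem_zpowers_of_prime_card hH fun h1 =>
    pow_ne_one_of_lt_orderOf hm.ne' ?_ (congr_arg Subtype.val h1)⟩
  rw [orderOf_eq_card_of_forall_mem_zpowers hg, hG]
  exact lt_mul_left hm hp.one_lt

theorem MonoidAlgebra.finite_compHom_mapDomainRingHom (K : Type*) [CommSemiring K] {G : Type*}
    [Group G] [Finite G] (H : Subgroup G) (M : Type*) [AddCommMonoid M]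
    [Module (MonoidAlgebra K G) M] [Module.Finite (MonoidAlgebra K G) M] :
    @Module.Finite (MonoidAlgebra K H) M _ _
      (Module.compHom M (mapDomainRingHom K H.subtype)) := by
  let ψ := mapDomainRingHom K H.subtype
  let _ : Module (MonoidAlgebra K H) (MonoidAlgebra K G) := Module.compHom _ ψ
  let _ : Module (MonoidAlgebra K H) M := Module.compHom M ψ
  have : IsScalarTower (MonoidAlgebra K H) (MonoidAlgebra K G) M :=
    ⟨fun a r x => mul_smul (ψ a) r x⟩
  have : IsScalarTower K (MonoidAlgebra K H) (MonoidAlgebra K G) := ⟨fun c a r => by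
    show ψ (c • a) * r = c • (ψ a * r)
    rw [← smul_mul_assoc]
    congr 1
    exact (mapDomainAlgHom K K H.subtype).map_smul_of_tower c a⟩
  have : Module.Finite (MonoidAlgebra K H) (MonoidAlgebra K G) :=
    .of_restrictScalars_finite K _ _
  exact .trans (MonoidAlgebra K G) M

/-- Let `G` be a cyclic group of order `p^a` and `H` its (unique) subgroup of order `p`,
`p` a prime. A finitely generated `F_p[G]`-module `M` is free over `F_p[G]` if and only
if its restriction to `H` is free over `F_p[H]`. -/
theorem stmt6 (p : ℕ) [Fact p.Prime] (a : ℕ) (ha : 1 ≤ a)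
    (G : Type*) [Group G] [IsCyclic G] [Fintype G] (hG : Fintype.card G = p ^ a)
    (H : Subgroup G) (hH : Nat.card H = p)
    (M : Type*) [AddCommGroup M] [Module (MonoidAlgebra (ZMod p) G) M]
    [Module.Finite (MonoidAlgebra (ZMod p) G) M] :
    Module.Free (MonoidAlgebra (ZMod p) G) M ↔
      @Module.Free (MonoidAlgebra (ZMod p) H) M _ _ (restrictedModule p H M) := by
  let _ := restrictedModule p H M
  have hp : p.Prime := Fact.out
  obtain ⟨g, hg⟩ := IsCyclic.exists_generator (α := G)
  have hpa : p ^ a = p * p ^ (a - 1) := by rw [← pow_succ', Nat.sub_add_cancel ha]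
  obtain ⟨hgm, hh⟩ := Subgroup.exists_pow_mem_generating_of_card_eq_prime hg
    (by rw [Nat.card_eq_fintype_card, hG, hpa]) H hH
  have : Fintype H := .ofFinite H
  have : Module.Finite (MonoidAlgebra (ZMod p) H) M :=
    MonoidAlgebra.finite_compHom_mapDomainRingHom (ZMod p) H M
  set t := MonoidAlgebra.of (ZMod p) G g - 1
  set s := MonoidAlgebra.of (ZMod p) H ⟨_, hgm⟩ - 1
  have hs : MonoidAlgebra.mapDomainRingHom (ZMod p) H.subtype s = t ^ p ^ (a - 1) := by
    rw [MonoidAlgebra.of_sub_one_pow_char_pow, map_sub, map_one]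
    simp
  -- `F_p[H]` acts on the restriction through its image in `F_p[G]`
  have hres : KerSMulLERangeSMul s (s ^ (p ^ 1 - 1)) M ↔
      KerSMulLERangeSMul (t ^ p ^ (a - 1)) (t ^ (p ^ a - p ^ (a - 1))) M := by
    rw [hpa, pow_one, ← Nat.sub_one_mul, mul_comm, pow_mul, ← hs, ← map_pow]
    exact Iff.rfl
  rw [MonoidAlgebra.free_iff_kerSMulLERangeSMul (ZMod p) p hg hG M,
    MonoidAlgebra.free_iff_kerSMulLERangeSMul (ZMod p) p hh (b := 1)
      (by rw [← Nat.card_eq_fintype_card, hH, pow_one]) M, hres]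
  exact (kerSMulLERangeSMul_pow_iff (pow_ne_zero _ hp.ne_zero)
    (by rw [hpa]; exact lt_mul_left (pow_pos hp.pos _) hp.one_lt)).symm
end

section
/- Let C = C^⊥ ≤ F_2^72 be a self-dual code invariant under the fixed-point-free involution g swapping coordinates 2i−1 and 2i. Then π(C(g)) = Φ(C)^⊥, where Φ(C) is the image of C under the pairwise-sum map and π projects the fixed code to F_2^36. -/
/-- The fixed-point-free involution swapping coordinates `2i` and `2i+1` for each `i`. -/
def swapFun (k : Fin 72) : Fin 72 :=
  if k.val % 2 = 0 then k + 1 else k - 1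

/-- The pairwise-sum map `Φ(c)_i = c_{2i} + c_{2i+1}`. -/
def phiMap (c : Fin 72 → ZMod 2) : Fin 36 → ZMod 2 :=
  fun i => c ⟨2 * i.val, by omega⟩ + c ⟨2 * i.val + 1, by omega⟩

/-- The projection `π(c)_i = c_{2i}`, halving each doubled coordinate vector. -/
def piMap (c : Fin 72 → ZMod 2) : Fin 36 → ZMod 2 :=
  fun i => c ⟨2 * i.val, by omega⟩

lemma pairSum (f : Fin 72 → ZMod 2) :
    ∑ k, f k = ∑ i : Fin 36, (f ⟨2 * i.val, by omega⟩ + f ⟨2 * i.val + 1, by omega⟩) := by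
  rw [← Equiv.sum_comp (finProdFinEquiv (m := 36) (n := 2)) f, Fintype.sum_prod_type]
  refine Finset.sum_congr rfl fun i _ => ?_
  rw [Fin.sum_univ_two]
  congr 1 <;> (apply congrArg; ext; simp [finProdFinEquiv]; try omega)

lemma swap_val (k : Fin 72) :
    (swapFun k).val = if k.val % 2 = 0 then k.val + 1 else k.val - 1 := by
  unfold swapFun
  split <;> simp_all [Fin.add_def, Fin.sub_def] <;> omega

/-- Let `C = C^⊥ ≤ F₂^72` be a self-dual code invariant under the fixed-point-free
involution `g` swapping coordinates `2i-1` and `2i`. Then `π(C(g)) = Φ(C)^⊥`, where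
duals are taken with respect to the standard bilinear form. -/
theorem stmt15 (C : Submodule (ZMod 2) (Fin 72 → ZMod 2))
    (hsd : (C : Set (Fin 72 → ZMod 2)) = {u | ∀ v ∈ C, ∑ i, u i * v i = 0})
    (hinv : ∀ c ∈ C, (fun k => c (swapFun k)) ∈ C) :
    {x : Fin 36 → ZMod 2 | ∃ d ∈ C, (∀ k, d (swapFun k) = d k) ∧ piMap d = x} =
      {u : Fin 36 → ZMod 2 | ∀ c ∈ C, ∑ i, u i * phiMap c i = 0} := by
  have hmem : ∀ w : Fin 72 → ZMod 2, w ∈ C ↔ ∀ v ∈ C, ∑ i, w i * v i = 0 := by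
    intro w
    have := Set.ext_iff.mp hsd w
    simpa using this
  ext x
  simp only [Set.mem_setOf_eq]
  constructor
  · rintro ⟨d, hdC, hdfix, rfl⟩ c hc
    have hpair : ∀ i : Fin 36, d ⟨2 * i.val + 1, by omega⟩ = d ⟨2 * i.val, by omega⟩ := by
      intro i
      have h := hdfix ⟨2 * i.val, by omega⟩
      have hv : swapFun ⟨2 * i.val, by omega⟩ = ⟨2 * i.val + 1, by omega⟩ := by
        apply Fin.ext
        rw [swap_val]
        simp [Nat.mul_mod_right]
      rw [hv] at h
      exact h
    have key : ∑ i, piMap d i * phiMap c i = ∑ k, d k * c k := by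
      rw [pairSum (fun k => d k * c k)]
      refine Finset.sum_congr rfl fun i _ => ?_
      simp only [piMap, phiMap]
      rw [hpair i]
      ring
    rw [key]
    exact (hmem d).mp hdC c hc
  · intro hu
    refine ⟨fun k => x ⟨k.val / 2, by omega⟩, ?_, ?_, ?_⟩
    · rw [hmem]
      intro v hv
      have key : ∑ k, x ⟨k.val / 2, by omega⟩ * v k = ∑ i, x i * phiMap v i := by
        rw [pairSum (fun k => x ⟨k.val / 2, by omega⟩ * v k)]
        refine Finset.sum_congr rfl fun i _ => ?_
        have h1 : (2 * i.val) / 2 = i.val := by omega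
        have h2 : (2 * i.val + 1) / 2 = i.val := by omega
        simp only [phiMap, h1, h2]
        have he : (⟨i.val, by omega⟩ : Fin 36) = i := rfl
        rw [he]
        ring
      rw [key]
      exact hu v hv
    · intro k
      apply congrArg
      apply Fin.ext
      have h := swap_val k
      have hk := k.isLt
      show (swapFun k).val / 2 = k.val / 2
      rw [h]
      split <;> omega
    · funext i
      simp only [piMap]
      apply congrArg
      apply Fin.ext
      show (2 * i.val) / 2 = i.val
      omega
end

section
/- A permutation of {1,…,72} of order 10 whose fifth power is fixed-point-free and whose square has exactly fourteen 5-cycles and two fixed points induces, on the 36 orbits of its fifth power, a permutation with seven 5-cycles and one fixed point. -/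
open Equiv

/-- A permutation `σ` of `{1,…,72}` of order `10` whose fifth power is fixed-point-free
(hence an involution with `36` orbits of size `2`) and whose square has exactly fourteen
`5`-cycles and two fixed points induces, on the `36` orbits of `σ^5`, a permutation with
seven `5`-cycles and one fixed point. (The induced permutation is encoded by any
surjection `f : Fin 72 → Fin 36` whose fibers are exactly the `σ^5`-orbits together with
a permutation `τ` of `Fin 36` satisfying `f ∘ σ² = τ ∘ f`.) -/
theorem stmt18 (σ : Equiv.Perm (Fin 72))
    (hord : orderOf σ = 10)
    (hfpf : ∀ x, (σ ^ 5) x ≠ x)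
    (hct : (σ ^ 2).cycleType = Multiset.replicate 14 5)
    (f : Fin 72 → Fin 36) (τ : Equiv.Perm (Fin 36))
    (hsurj : Function.Surjective f)
    (hfib : ∀ x y, f x = f y ↔ (y = x ∨ y = (σ ^ 5) x))
    (hcomm : ∀ x, f ((σ ^ 2) x) = τ (f x)) :
    τ.cycleType = Multiset.replicate 7 5 ∧
      (Finset.univ.filter fun x => τ x = x).card = 1 := by
  have h10 : σ ^ 10 = 1 := by rw [← hord]; exact pow_orderOf_eq_one σ
  have hpow : ∀ (g : Perm (Fin 72)) (x) (m : ℕ), g x = x → (g ^ m) x = x := by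
    intro g x m h
    induction m with
    | zero => simp
    | succ n ih => rw [pow_succ]; simp [Perm.mul_apply, h, ih]
  have hσ1 : ∀ x, σ x ≠ x := by
    intro x hx
    exact hfpf x (hpow σ x 5 hx)
  have hkey : ∀ (k : ℕ) (x : Fin 72), (τ ^ k) (f x) = f (((σ ^ 2) ^ k) x) := by
    intro k
    induction k with
    | zero => simp
    | succ n ih =>
      intro x
      rw [pow_succ, pow_succ, Perm.mul_apply, Perm.mul_apply, ← hcomm, ih]
  have hτ5 : τ ^ 5 = 1 := by
    apply Equiv.ext
    intro y
    rw [Perm.one_apply]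
    obtain ⟨x, rfl⟩ := hsurj y
    have h := hkey 5 x
    rw [← pow_mul] at h
    norm_num at h
    rw [h10] at h
    simpa using h
  -- fixed points of σ^2
  have hsupp2 : (σ ^ 2).support.card = 70 := by
    rw [← Equiv.Perm.sum_cycleType, hct]; simp
  have hsplit := Finset.card_filter_add_card_filter_not
    (s := (Finset.univ : Finset (Fin 72))) (p := fun x => (σ ^ 2) x = x)
  have hsuppeq : (Finset.univ.filter fun x => ¬ (σ ^ 2) x = x) = (σ ^ 2).support := rfl
  rw [hsuppeq, hsupp2, Finset.card_univ] at hsplit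
  simp only [Fintype.card_fin] at hsplit
  have hfix2 : (Finset.univ.filter fun x => (σ ^ 2) x = x).card = 2 := by omega
  obtain ⟨a, ha⟩ : ∃ a, (σ ^ 2) a = a := by
    have : (Finset.univ.filter fun x => (σ ^ 2) x = x).Nonempty := by
      rw [← Finset.card_pos, hfix2]; norm_num
    obtain ⟨a, ha⟩ := this
    exact ⟨a, (Finset.mem_filter.mp ha).2⟩
  have hb : (σ ^ 2) ((σ ^ 5) a) = (σ ^ 5) a := by
    rw [← Perm.mul_apply, ← pow_add]
    rw [show (2 + 5 : ℕ) = 5 + 2 by norm_num, pow_add, Perm.mul_apply, ha]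
  have hne : a ≠ (σ ^ 5) a := fun h => hfpf a h.symm
  have hset : (Finset.univ.filter fun x => (σ ^ 2) x = x) = {a, (σ ^ 5) a} := by
    refine (Finset.eq_of_subset_of_card_le ?_ ?_).symm
    · intro x hx
      simp only [Finset.mem_insert, Finset.mem_singleton] at hx
      rcases hx with rfl | rfl <;> simp [ha, hb]
    · rw [hfix2, Finset.card_insert_of_notMem (by simpa using hne), Finset.card_singleton]
  -- fixed points of τ
  have hτfix : ∀ y, τ y = y ↔ y = f a := by
    intro y
    constructor
    · intro h
      obtain ⟨x, rfl⟩ := hsurj y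
      rw [← hcomm] at h
      rcases (hfib ((σ ^ 2) x) x).mp h with h1 | h1
      · -- x = σ^2 x
        have hx2 : (σ ^ 2) x = x := h1.symm
        have : x ∈ ({a, (σ ^ 5) a} : Finset (Fin 72)) := by
          rw [← hset]; simp [hx2]
        simp only [Finset.mem_insert, Finset.mem_singleton] at this
        exact (hfib a x).mp ((hfib a x).mpr this) |>.elim
          (fun _ => (hfib a x).mpr this ▸ rfl) (fun _ => (hfib a x).mpr this ▸ rfl)
      · -- x = σ^5 (σ^2 x) = σ^7 x
        exfalso
        have h7 : (σ ^ 7) x = x := by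
          rw [show (7 : ℕ) = 5 + 2 by norm_num, pow_add, Perm.mul_apply, ← h1]
        have h21 : ((σ ^ 7) ^ 3) x = x := hpow _ _ 3 h7
        rw [← pow_mul] at h21
        have hs : σ ^ (7 * 3) = σ := by
          rw [show (7 * 3 : ℕ) = 10 * 2 + 1 by norm_num, pow_add, pow_mul, h10]
          simp
        rw [hs] at h21
        exact hσ1 x h21
    · rintro rfl
      rw [← hcomm, ha]
  have hfilter : (Finset.univ.filter fun y => τ y = y) = {f a} := by
    ext y
    simp [hτfix y]
  have hcard1 : (Finset.univ.filter fun y => τ y = y).card = 1 := by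
    rw [hfilter]; simp
  refine ⟨?_, hcard1⟩
  -- support of τ
  have hsplitτ := Finset.card_filter_add_card_filter_not
    (s := (Finset.univ : Finset (Fin 36))) (p := fun y => τ y = y)
  have hsuppτeq : (Finset.univ.filter fun y => ¬ τ y = y) = τ.support := rfl
  rw [hsuppτeq, hcard1, Finset.card_univ] at hsplitτ
  simp only [Fintype.card_fin] at hsplitτ
  have hsuppτ : τ.support.card = 35 := by omega
  have hsum : τ.cycleType.sum = 35 := by rw [Equiv.Perm.sum_cycleType, hsuppτ]
  have hordτ : orderOf τ ∣ 5 := orderOf_dvd_of_pow_eq_one hτ5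
  have hmem : ∀ n ∈ τ.cycleType, n = 5 := by
    intro n hn
    have h1 := Equiv.Perm.two_le_of_mem_cycleType hn
    have h2 : n ∣ 5 := (Equiv.Perm.dvd_of_mem_cycleType hn).trans hordτ
    rcases (Nat.prime_five).eq_one_or_self_of_dvd n h2 with h | h <;> omega
  have hrep : τ.cycleType = Multiset.replicate (Multiset.card τ.cycleType) 5 :=
    Multiset.eq_replicate_card.mpr hmem
  have : Multiset.card τ.cycleType = 7 := by
    have := hsum
    rw [hrep, Multiset.sum_replicate, smul_eq_mul] at this
    omega
  rw [hrep, this]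
end

section
/- If a group U ≅ Z/4 × Z/2 acts on a set of 72 elements such that every element of order 2 in U acts without fixed points, then U acts freely, and an element h of order 4 induces a permutation consisting of nine 4-cycles on the 36 orbits of an element g of order 2 with g ∉ ⟨h⟩. -/
/-!
`U` is a `2`-group, so a nontrivial point stabilizer would contain an element of order `2`;
hence the action is free. The permutation `τ` induced by `h` on the `⟨g⟩`-orbits satisfies
`τ ^ 4 = 1`, and `τ ^ 2` fixes the orbit `{x, g • x}` only if `h ^ 2 • x ∈ {x, g • x}`, i.e. only
if `h ^ 2` or `g⁻¹ * h ^ 2` fixes `x`. Freeness rules this out, as `h ^ 2 ≠ 1` and `h ^ 2 ≠ g`.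
So every cycle of `τ` has length `4`.
-/

open Equiv

theorem IsPGroup.eq_one_of_smul_eq_self {p : ℕ} [Fact p.Prime] {U X : Type*} [Group U]
    [MulAction U X] (hU : IsPGroup p U) (hfpf : ∀ u : U, orderOf u = p → ∀ x : X, u • x ≠ x)
    {u : U} {x : X} (hx : u • x = x) : u = 1 := by
  by_contra hu
  obtain ⟨k, hk⟩ := hU.exists_orderOf_eq_pow u
  have hv : orderOf (u ^ (orderOf u / p)) = p :=
    orderOf_pow_orderOf_div (by simp [hk, (Fact.out : p.Prime).ne_zero]) (hU.dvd_orderOf hu)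
  exact hfpf _ hv x ((MulAction.stabilizer U x).pow_mem hx _)

namespace Equiv.Perm

variable {α : Type*} [Fintype α] [DecidableEq α]

theorem exists_card_support_cycleOf_eq_of_mem_cycleType {σ : Perm α} {n : ℕ}
    (hn : n ∈ σ.cycleType) :
    ∃ x, (σ.cycleOf x).support.card = n := by
  obtain ⟨c, hc, rfl⟩ := Multiset.mem_map.mp hn
  obtain ⟨x, hx⟩ := (mem_cycleFactorsFinset_iff.mp hc).1.nonempty_support
  exact ⟨x, by rw [← cycle_is_cycleOf hx hc]; rfl⟩

theorem cycleType_eq_replicate_of_pow_prime_pow_eq_one {p k : ℕ} (hp : p.Prime) {σ : Perm α}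
    (hσ : σ ^ p ^ (k + 1) = 1) (hfree : ∀ x, (σ ^ p ^ k) x ≠ x) :
    σ.cycleType = Multiset.replicate (Fintype.card α / p ^ (k + 1)) (p ^ (k + 1)) := by
  have hlen : ∀ n ∈ σ.cycleType, n = p ^ (k + 1) := by
    intro n hn
    obtain ⟨j, hj, rfl⟩ := (Nat.dvd_prime_pow hp).mp
      ((dvd_of_mem_cycleType hn).trans (orderOf_dvd_of_pow_eq_one hσ))
    refine le_antisymm (Nat.pow_le_pow_right hp.pos hj) (Nat.pow_le_pow_right hp.pos ?_)
    by_contra! hjk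
    obtain ⟨x, hx⟩ := exists_card_support_cycleOf_eq_of_mem_cycleType hn
    apply hfree x
    rw [← pow_mod_card_support_cycleOf_self_apply, hx,
      Nat.mod_eq_zero_of_dvd (pow_dvd_pow p (Nat.lt_succ_iff.mp hjk)), pow_zero, one_apply]
  have hsupp : σ.support = Finset.univ := by
    refine Finset.eq_univ_of_forall fun x => mem_support.mpr fun hx => hfree x ?_
    exact pow_apply_eq_self_of_apply_eq_self hx _
  have hsum := sum_cycleType σ
  rw [Multiset.eq_replicate_card.mpr hlen, Multiset.sum_replicate, smul_eq_mul, hsupp,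
    Finset.card_univ] at hsum
  rw [Multiset.eq_replicate_card.mpr hlen, ← hsum, Nat.mul_div_cancel _ (pow_pos hp.pos _)]

end Equiv.Perm

namespace Function.Semiconj

variable {U X ι : Type*} [Group U] [MulAction U X] {f : X → ι} {τ : Perm ι} {h : U}

theorem apply_pow_smul (hτ : Semiconj f (h • ·) τ) (n : ℕ) (x : X) :
    f (h ^ n • x) = (τ ^ n) (f x) := by
  simpa only [smul_iterate, Perm.iterate_eq_pow] using hτ.iterate_right n x

theorem perm_pow_eq_one (hτ : Semiconj f (h • ·) τ) (hsurj : Surjective f) {n : ℕ}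
    (hn : h ^ n = 1) : τ ^ n = 1 := by
  ext y
  obtain ⟨x, rfl⟩ := hsurj y
  rw [← hτ.apply_pow_smul, hn, one_smul, Perm.one_apply]

theorem perm_pow_apply_ne_self (hτ : Semiconj f (h • ·) τ) (hsurj : Surjective f)
    (hfree : ∀ (u : U) (x : X), u • x = x → u = 1) {g : U}
    (hf : ∀ x y, f x = f y → y = x ∨ y = g • x) {n : ℕ} (hn : h ^ n ≠ 1) (hng : h ^ n ≠ g)
    (y : ι) : (τ ^ n) y ≠ y := by
  obtain ⟨x, rfl⟩ := hsurj y
  rw [← hτ.apply_pow_smul]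
  intro hx
  rcases hf x _ hx.symm with hx | hx
  · exact hn (hfree _ x hx)
  · refine hng (inv_mul_eq_one.mp (hfree (g⁻¹ * h ^ n) x ?_)).symm
    rw [mul_smul, hx, inv_smul_smul]

end Function.Semiconj

/-- The permutation induced by `h` on the `⟨g⟩`-orbits is encoded by a surjection
`f : X → Fin 36` whose fibers are the `⟨g⟩`-orbits and a permutation `τ` with
`f ∘ (h • ·) = τ ∘ f`. -/
theorem stmt19_general (U : Type*) [Group U]
    (hU : Nonempty (U ≃* (Multiplicative (ZMod 4) × Multiplicative (ZMod 2))))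
    (X : Type*) [MulAction U X]
    (hfpf : ∀ u : U, orderOf u = 2 → ∀ x : X, u • x ≠ x) :
    (∀ (u : U) (x : X), u • x = x → u = 1) ∧
    ∀ h g : U, orderOf h = 4 → orderOf g = 2 → g ∉ Subgroup.zpowers h →
      ∀ (f : X → Fin 36) (τ : Equiv.Perm (Fin 36)),
        Function.Surjective f →
        (∀ x y, f x = f y ↔ (y = x ∨ y = g • x)) →
        (∀ x, f (h • x) = τ (f x)) →
        τ.cycleType = Multiset.replicate 9 4 := by
  obtain ⟨e⟩ := hU
  have h2U : IsPGroup 2 U := IsPGroup.of_card (n := 3) (by simp [Nat.card_congr e.toEquiv])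
  have hfree : ∀ (u : U) (x : X), u • x = x → u = 1 :=
    fun _ _ => h2U.eq_one_of_smul_eq_self hfpf
  refine ⟨hfree, fun h g hh _ hgh f τ hsurj hf hτ => ?_⟩
  have hτ4 : τ ^ 2 ^ (1 + 1) = 1 :=
    Function.Semiconj.perm_pow_eq_one hτ hsurj
      (by rw [show 2 ^ (1 + 1) = orderOf h by omega, pow_orderOf_eq_one])
  have hτ2 : ∀ y, (τ ^ 2 ^ 1) y ≠ y :=
    Function.Semiconj.perm_pow_apply_ne_self hτ hsurj hfree (fun x y => (hf x y).mp)
      (pow_ne_one_of_lt_orderOf (by norm_num) (by omega))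
      (fun h2g => hgh (h2g ▸ pow_mem (Subgroup.mem_zpowers h) _))
  simpa using Perm.cycleType_eq_replicate_of_pow_prime_pow_eq_one Nat.prime_two hτ4 hτ2

/-- If a group `U ≅ Z/4 × Z/2` acts on a set of `72` elements such that every element of
order `2` in `U` acts without fixed points, then `U` acts freely, and any element `h` of
order `4` induces a permutation consisting of nine `4`-cycles on the `36` orbits of any
element `g` of order `2` with `g ∉ ⟨h⟩`. (The induced permutation is encoded by any
surjection `f : X → Fin 36` whose fibers are exactly the `⟨g⟩`-orbits together with a
permutation `τ` of `Fin 36` satisfying `f ∘ h = τ ∘ f`.) -/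
theorem stmt19 (U : Type*) [Group U]
    (hU : Nonempty (U ≃* (Multiplicative (ZMod 4) × Multiplicative (ZMod 2))))
    (X : Type*) [Fintype X] [MulAction U X] (hX : Fintype.card X = 72)
    (hfpf : ∀ u : U, orderOf u = 2 → ∀ x : X, u • x ≠ x) :
    (∀ (u : U) (x : X), u • x = x → u = 1) ∧
    ∀ h g : U, orderOf h = 4 → orderOf g = 2 → g ∉ Subgroup.zpowers h →
      ∀ (f : X → Fin 36) (τ : Equiv.Perm (Fin 36)),
        Function.Surjective f →
        (∀ x y, f x = f y ↔ (y = x ∨ y = g • x)) →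
        (∀ x, f (h • x) = τ (f x)) →
        τ.cycleType = Multiset.replicate 9 4 :=
  stmt19_general U hU X hfpf
end
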